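/- arXiv:1610.06329 — 5 statements merged into one kernel-verified Lean document; each statement's English description precedes it below -/
import Mathlib

section
/- (Prony uniqueness, case d = 1.) Let n ≥ 1. Let λ_1, …, λ_n ∈ ℂ be pairwise distinct and μ_1, …, μ_n ∈ ℂ be pairwise distinct, and let α_1, …, α_n ∈ ℂ and β_1, …, β_n ∈ ℂ all be nonzero. If Σ_{j=1}^n α_j λ_j^s = Σ_{j=1}^n β_j μ_j^s for every integer s with 0 ≤ s ≤ 2n−1, then there exists a permutation σ of {1, …, n} such that μ_j = λ_{σ(j)} and β_j = α_{σ(j)} for all j. Hence an n-term univariate exponential sum with pairwise distinct nodes and nonzero coefficients is uniquely determined by its 2n equidistant samples. -/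
/-!
Encode an exponential sum `∑ j, a j * v j ^ s` as the finitely supported function sending each
node to its coefficient, so that the `s`-th sample is the `s`-th power moment of that function.
The difference of the two encodings has at most `2n` nodes and vanishing moments of order `< 2n`;
the Vandermonde matrix of its nodes is invertible, so the difference is zero. Equal encodings with
distinct nodes and nonzero coefficients list the same terms, up to a permutation.
-/

open Finset Finsupp Function

theorem Finsupp.eq_zero_of_linearCombination_pow_eq_zero {R : Type*} [CommRing R] [IsDomain R]
    {c : R →₀ R} {N : ℕ} (hN : #c.support ≤ N)
    (h : ∀ s < N, linearCombination R (· ^ s) c = 0) : c = 0 := by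
  set e := c.support.equivFin
  have hnodes : Injective fun i => (e.symm i : R) := Subtype.val_injective.comp e.symm.injective
  have hvanish : (fun i => c (e.symm i)) = 0 := by
    refine Matrix.eq_zero_of_forall_pow_sum_mul_pow_eq_zero hnodes fun s => ?_
    rw [← h s (s.2.trans_le hN), linearCombination_apply, Finsupp.sum, ← sum_coe_sort c.support]
    exact e.symm.sum_comp fun z : c.support => c z * (z : R) ^ (s : ℕ)
  ext z
  by_cases hz : z ∈ c.support
  · simpa using congrFun hvanish (e ⟨z, hz⟩)
  · exact notMem_support_iff.mp hz

section NodeWeights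

variable {ι X M : Type*}

/-- The discrete measure `∑ j, a j • δ_{v j}`; coefficients of terms sharing a node add up. -/
noncomputable def nodeWeights [Finite ι] [AddCommMonoid M] (v : ι → X) (a : ι → M) : X →₀ M :=
  mapDomain v (equivFunOnFinite.symm a)

variable [Finite ι] [AddCommMonoid M] {v : ι → X} {a : ι → M}

theorem nodeWeights_apply_of_injective (hv : Injective v) (j : ι) :
    nodeWeights v a (v j) = a j :=
  mapDomain_apply hv _ j

theorem nodeWeights_apply_of_notMem_range {x : X} (hx : x ∉ Set.range v) :
    nodeWeights v a x = 0 :=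
  mapDomain_of_notMem_range _ x hx

theorem card_support_nodeWeights_le [Fintype ι] [DecidableEq X] :
    #(nodeWeights v a).support ≤ Fintype.card ι :=
  (card_le_card mapDomain_support).trans (card_image_le.trans (card_le_univ _))

theorem linearCombination_nodeWeights [Fintype ι] {R : Type*} [CommSemiring R] (v : ι → R)
    (a : ι → R) (s : ℕ) :
    linearCombination R (· ^ s) (nodeWeights v a) = ∑ j, a j * v j ^ s := by
  simp only [nodeWeights, linearCombination_mapDomain, equivFunOnFinite_symm_eq_sum, map_sum,
    linearCombination_single, comp_apply, smul_eq_mul]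

theorem exists_perm_of_nodeWeights_eq {lam mu : ι → X} {α β : ι → M}
    (hlam : Injective lam) (hmu : Injective mu) (hβ : ∀ j, β j ≠ 0)
    (h : nodeWeights lam α = nodeWeights mu β) :
    ∃ σ : Equiv.Perm ι, ∀ j, mu j = lam (σ j) ∧ β j = α (σ j) := by
  have hmatch : ∀ j, ∃ k, mu j = lam k ∧ β j = α k := by
    intro j
    have hβj : nodeWeights lam α (mu j) = β j := by rw [h, nodeWeights_apply_of_injective hmu]
    obtain ⟨k, hk⟩ : mu j ∈ Set.range lam := by
      by_contra hj
      exact hβ j (hβj ▸ nodeWeights_apply_of_notMem_range hj)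
    exact ⟨k, hk.symm, by rw [← hβj, ← hk, nodeWeights_apply_of_injective hlam]⟩
  choose σ hσ using hmatch
  have hσ_inj : Injective σ := fun i j hij => hmu (by rw [(hσ i).1, (hσ j).1, hij])
  exact ⟨Equiv.ofBijective σ hσ_inj.bijective_of_finite, hσ⟩

end NodeWeights

theorem prony_uniqueness_univariate_general
    (n : ℕ)
    (lam mu α β : Fin n → ℂ)
    (hlam : Function.Injective lam) (hmu : Function.Injective mu)
    (hβ : ∀ j, β j ≠ 0)
    (hsamp : ∀ s : ℕ, s ≤ 2 * n - 1 →
      ∑ j, α j * lam j ^ s = ∑ j, β j * mu j ^ s) :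
    ∃ σ : Equiv.Perm (Fin n), ∀ j, mu j = lam (σ j) ∧ β j = α (σ j) := by
  classical
  refine exists_perm_of_nodeWeights_eq hlam hmu hβ (sub_eq_zero.mp ?_)
  refine eq_zero_of_linearCombination_pow_eq_zero (N := 2 * n) ?_ fun s hs => ?_
  · calc #(nodeWeights lam α - nodeWeights mu β).support
        ≤ #((nodeWeights lam α).support ∪ (nodeWeights mu β).support) :=
          card_le_card support_sub
      _ ≤ n + n := by
          grw [card_union_le, card_support_nodeWeights_le, card_support_nodeWeights_le,
            Fintype.card_fin]
      _ = 2 * n := (two_mul n).symm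
  · rw [map_sub, linearCombination_nodeWeights, linearCombination_nodeWeights,
      hsamp s (by omega), sub_self]

/-- Prony uniqueness in the univariate case: an `n`-term exponential sum
`F_s = ∑ j, α j * λ j ^ s` with pairwise distinct nodes and nonzero
coefficients is determined, up to a permutation of the terms, by its
`2n` equidistant samples `F_0, …, F_{2n-1}`. -/
theorem prony_uniqueness_univariate
    (n : ℕ) (hn : 1 ≤ n)
    (lam mu α β : Fin n → ℂ)
    (hlam : Function.Injective lam) (hmu : Function.Injective mu)
    (hα : ∀ j, α j ≠ 0) (hβ : ∀ j, β j ≠ 0)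
    (hsamp : ∀ s : ℕ, s ≤ 2 * n - 1 →
      ∑ j, α j * lam j ^ s = ∑ j, β j * mu j ^ s) :
    ∃ σ : Equiv.Perm (Fin n), ∀ j, mu j = lam (σ j) ∧ β j = α (σ j) :=
  prony_uniqueness_univariate_general n lam mu α β hlam hmu hβ hsamp
end

section
/- (Main theorem: recovery from (d+1)n samples.) Let d, n ≥ 1 and let Δ = δ_0, δ_1, …, δ_{d−1} be d linearly independent vectors in ℂ^d. Let (α_j, φ_j)_{j=1..n} and (α'_j, φ'_j)_{j=1..n} with all α_j, α'_j ∈ ℂ nonzero and φ_j, φ'_j ∈ ℂ^d, and suppose: the n values exp(⟨φ_j, Δ⟩) are pairwise distinct, as are the n values exp(⟨φ'_j, Δ⟩); |Im ⟨φ_j, Δ⟩| < π, |Im ⟨φ'_j, Δ⟩| < π for all j; and |Im ⟨φ_j, δ_i⟩| < π, |Im ⟨φ'_j, δ_i⟩| < π for all j and all i = 1, …, d−1. If Σ_{j=1}^n α_j exp(⟨φ_j, sΔ⟩) = Σ_{j=1}^n α'_j exp(⟨φ'_j, sΔ⟩) for all integers 0 ≤ s ≤ 2n−1, and Σ_{j=1}^n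 α_j exp(⟨φ_j, (ℓ−1)Δ + δ_i⟩) = Σ_{j=1}^n α'_j exp(⟨φ'_j, (ℓ−1)Δ + δ_i⟩) for all 1 ≤ ℓ ≤ n and 1 ≤ i ≤ d−1, then there exists a permutation σ of {1, …, n} with φ'_j = φ_{σ(j)} and α'_j = α_{σ(j)} for all j. Hence, under these conditions, the (d+1)n samples f(sΔ), 0 ≤ s ≤ 2n−1, and f((ℓ−1)Δ + δ_i), 1 ≤ ℓ ≤ n, 1 ≤ i ≤ d−1, determine all parameters of the exponential sum. -/
/-!
The samples `f(sΔ)`, `s < 2n`, are power sums of the nodes `z j = exp ⟨φ j, Δ⟩`, so the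
uniqueness part of Prony's method (a Vandermonde system on the at most `2n` distinct nodes of
both sums) matches nodes and coefficients up to a permutation `σ`. For a shift `δ i`, the
samples `f(ℓΔ + δ i)`, `ℓ < n`, are power sums of the now common nodes with weights
`α j * exp ⟨φ j, δ i⟩`, which an invertible `n × n` Vandermonde system determines. Since `exp`
is injective on the strip `|Im| < π`, this recovers every `⟨φ j, δ i⟩`, and as the `δ i` form a
basis these inner products determine `φ j`.
-/

open Complex Finset Matrix

theorem Complex.eq_of_exp_eq_of_abs_im_lt_pi {a b : ℂ} (ha : |a.im| < Real.pi)
    (hb : |b.im| < Real.pi) (h : exp a = exp b) : a = b := by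
  have hlog : ∀ z : ℂ, |z.im| < Real.pi → log (exp z) = z := fun z hz =>
    log_exp (abs_lt.mp hz).1 (abs_lt.mp hz).2.le
  rw [← hlog a ha, ← hlog b hb, h]

theorem Matrix.eq_of_forall_dotProduct_eq {K m : Type*} [Field K] [Fintype m] [DecidableEq m]
    {δ : m → m → K} (hδ : LinearIndependent K δ) {u v : m → K}
    (h : ∀ i, u ⬝ᵥ δ i = v ⬝ᵥ δ i) : u = v := by
  refine mulVec_injective_iff_isUnit.mpr (linearIndependent_rows_iff_isUnit.mp hδ)
    (funext fun i => ?_)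
  simpa [mulVec, dotProduct_comm] using h i

section NodeWeight

variable {R ι : Type*} [CommSemiring R] [DecidableEq R] [Fintype ι]

/-- The total weight that the sum `∑ j, α j * x j ^ s` puts on the node `w`. -/
def nodeWeight (x α : ι → R) (w : R) : R := ∑ j with x j = w, α j

theorem sum_nodeWeight_mul_pow {x : ι → R} {W : Finset R} (hW : ∀ j, x j ∈ W) (α : ι → R)
    (s : ℕ) : ∑ w ∈ W, nodeWeight x α w * w ^ s = ∑ j, α j * x j ^ s := by
  rw [← sum_fiberwise_of_maps_to (fun j _ => hW j)]
  refine sum_congr rfl fun w _ => ?_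
  rw [nodeWeight, sum_mul]
  exact sum_congr rfl fun j hj => by rw [(mem_filter.mp hj).2]

theorem nodeWeight_apply_of_injective {x : ι → R} (hx : Function.Injective x) (α : ι → R)
    (j : ι) : nodeWeight x α (x j) = α j :=
  sum_eq_single_of_mem j (by simp) fun _ hi hij => (hij (hx (mem_filter.mp hi).2)).elim

theorem exists_eq_of_nodeWeight_ne_zero {x α : ι → R} {w : R} (h : nodeWeight x α w ≠ 0) :
    ∃ j, x j = w := by
  obtain ⟨j, hj, -⟩ := exists_ne_zero_of_sum_ne_zero h
  exact ⟨j, (mem_filter.mp hj).2⟩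

end NodeWeight

section PowerSums

variable {R : Type*} [CommRing R] [IsDomain R]

theorem Finset.eq_zero_of_forall_pow_sum_mul_pow_eq_zero {W : Finset R} {c : R → R}
    (h : ∀ s < #W, ∑ w ∈ W, c w * w ^ s = 0) : ∀ w ∈ W, c w = 0 := by
  let g : Fin #W → R := fun i => W.equivFin.symm i
  have hg : Function.Injective g := fun i j hij => W.equivFin.symm.injective (Subtype.ext hij)
  have hcg : c ∘ g = 0 := Matrix.eq_zero_of_forall_pow_sum_mul_pow_eq_zero hg fun s => by
    rw [← h s s.isLt, ← sum_coe_sort W, ← W.equivFin.symm.sum_comp]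
    rfl
  intro w hw
  simpa [g] using congrFun hcg (W.equivFin ⟨w, hw⟩)

theorem eq_comp_of_forall_pow_sum_mul_eq {n : ℕ} {z a b : Fin n → R} (σ : Equiv.Perm (Fin n))
    (hz : Function.Injective z)
    (h : ∀ s : Fin n, ∑ j, a j * z j ^ (s : ℕ) = ∑ j, b j * z (σ j) ^ (s : ℕ)) :
    ∀ j, b j = a (σ j) := by
  have hab : a - b ∘ σ.symm = 0 := Matrix.eq_zero_of_forall_pow_sum_mul_pow_eq_zero hz fun s => by
    have hb : ∑ j, b (σ.symm j) * z j ^ (s : ℕ) = ∑ j, b j * z (σ j) ^ (s : ℕ) :=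
      (Equiv.sum_comp σ fun j => b (σ.symm j) * z j ^ (s : ℕ)).symm.trans (by simp)
    simp [sub_mul, h s, hb]
  intro j
  exact (sub_eq_zero.mp (by simpa using congrFun hab (σ j))).symm

theorem exists_perm_of_forall_pow_sum_mul_eq [DecidableEq R] {ι : Type*} [Fintype ι]
    {x x' α α' : ι → R} (hx : Function.Injective x) (hx' : Function.Injective x')
    (hα' : ∀ j, α' j ≠ 0)
    (h : ∀ s < 2 * Fintype.card ι, ∑ j, α j * x j ^ s = ∑ j, α' j * x' j ^ s) :
    ∃ σ : Equiv.Perm ι, ∀ j, x' j = x (σ j) ∧ α' j = α (σ j) := by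
  set W := image x univ ∪ image x' univ
  have hxW : ∀ j, x j ∈ W := fun j => mem_union_left _ (mem_image_of_mem x (mem_univ j))
  have hx'W : ∀ j, x' j ∈ W := fun j => mem_union_right _ (mem_image_of_mem x' (mem_univ j))
  have hweight : ∀ w ∈ W, nodeWeight x α w = nodeWeight x' α' w := by
    have hcard : #W ≤ 2 * Fintype.card ι := (card_union_le _ _).trans <| by
      have := card_image_le (s := univ) (f := x); have := card_image_le (s := univ) (f := x')
      simp only [card_univ] at *; omega
    have := eq_zero_of_forall_pow_sum_mul_pow_eq_zero (W := W)
      (c := fun w => nodeWeight x α w - nodeWeight x' α' w) fun s hs => by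
        simp only [sub_mul, sum_sub_distrib, sum_nodeWeight_mul_pow hxW,
          sum_nodeWeight_mul_pow hx'W, h s (hs.trans_le hcard), sub_self]
    exact fun w hw => sub_eq_zero.mp (this w hw)
  have hmatch : ∀ j, ∃ t, x t = x' j ∧ α t = α' j := by
    intro j
    have hj : nodeWeight x α (x' j) = α' j := by
      rw [hweight _ (hx'W j), nodeWeight_apply_of_injective hx']
    obtain ⟨t, ht⟩ := exists_eq_of_nodeWeight_ne_zero (hj ▸ hα' j)
    exact ⟨t, ht, by rw [← nodeWeight_apply_of_injective hx α t, ht, hj]⟩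
  choose τ hτx hτα using hmatch
  have hτ : Function.Injective τ := fun i j hij => hx' <| by rw [← hτx i, ← hτx j, hij]
  exact ⟨Equiv.ofBijective τ (Finite.injective_iff_bijective.mp hτ),
    fun j => ⟨(hτx j).symm, (hτα j).symm⟩⟩

end PowerSums

theorem Complex.exp_sum_mul_natCast_mul {m : Type*} [Fintype m] (φ Δ : m → ℂ) (s : ℕ) :
    exp (∑ k, φ k * ((s : ℂ) * Δ k)) = exp (∑ k, φ k * Δ k) ^ s := by
  rw [← exp_nat_mul, mul_sum]
  exact congrArg exp (sum_congr rfl fun k _ => by ring)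

theorem Complex.exp_sum_mul_natCast_mul_add {m : Type*} [Fintype m] (φ Δ δ : m → ℂ) (s : ℕ) :
    exp (∑ k, φ k * ((s : ℂ) * Δ k + δ k)) =
      exp (∑ k, φ k * δ k) * exp (∑ k, φ k * Δ k) ^ s := by
  rw [← exp_sum_mul_natCast_mul, ← exp_add, ← sum_add_distrib]
  exact congrArg exp (sum_congr rfl fun k _ => by ring)

theorem recovery_from_min_samples_general
    (d n : ℕ) (hd : 1 ≤ d)
    (δ : Fin d → Fin d → ℂ) (hδ : LinearIndependent ℂ δ)
    (α α' : Fin n → ℂ) (φ φ' : Fin n → Fin d → ℂ)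
    (hα' : ∀ j, α' j ≠ 0)
    (hdist : Function.Injective fun j => Complex.exp (∑ k, φ j k * δ ⟨0, hd⟩ k))
    (hdist' : Function.Injective fun j => Complex.exp (∑ k, φ' j k * δ ⟨0, hd⟩ k))
    (hIm : ∀ j i, |(∑ k, φ j k * δ i k).im| < Real.pi)
    (hIm' : ∀ j i, |(∑ k, φ' j k * δ i k).im| < Real.pi)
    (hsamp1 : ∀ s : ℕ, s ≤ 2 * n - 1 →
      ∑ j, α j * Complex.exp (∑ k, φ j k * ((s : ℂ) * δ ⟨0, hd⟩ k)) =
      ∑ j, α' j * Complex.exp (∑ k, φ' j k * ((s : ℂ) * δ ⟨0, hd⟩ k)))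
    (hsamp2 : ∀ (ℓ : Fin n) (i : Fin d), i ≠ ⟨0, hd⟩ →
      ∑ j, α j * Complex.exp (∑ k, φ j k * (((ℓ : ℕ) : ℂ) * δ ⟨0, hd⟩ k + δ i k)) =
      ∑ j, α' j * Complex.exp (∑ k, φ' j k * (((ℓ : ℕ) : ℂ) * δ ⟨0, hd⟩ k + δ i k))) :
    ∃ σ : Equiv.Perm (Fin n), ∀ j, φ' j = φ (σ j) ∧ α' j = α (σ j) := by
  obtain ⟨σ, hσ⟩ : ∃ σ : Equiv.Perm (Fin n), ∀ j,
      exp (∑ k, φ' j k * δ ⟨0, hd⟩ k) = exp (∑ k, φ (σ j) k * δ ⟨0, hd⟩ k) ∧ α' j = α (σ j) :=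
    exists_perm_of_forall_pow_sum_mul_eq hdist hdist' hα' fun s hs => by
      simpa only [exp_sum_mul_natCast_mul] using
        hsamp1 s (by simp only [Fintype.card_fin] at hs; omega)
  obtain ⟨hnode, hcoeff⟩ := forall_and.mp hσ
  have hinner : ∀ i j, ∑ k, φ' j k * δ i k = ∑ k, φ (σ j) k * δ i k := by
    intro i j
    refine eq_of_exp_eq_of_abs_im_lt_pi (hIm' j i) (hIm (σ j) i) ?_
    by_cases hi : i = ⟨0, hd⟩
    · exact hi ▸ hnode j
    · have hweights := eq_comp_of_forall_pow_sum_mul_eq σ hdist fun ℓ => by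
        simpa only [exp_sum_mul_natCast_mul_add, ← mul_assoc, hnode] using hsamp2 ℓ i hi
      exact mul_left_cancel₀ (hα' j) ((hweights j).trans (by rw [hcoeff j]))
  exact ⟨σ, fun j => ⟨eq_of_forall_dotProduct_eq hδ (hinner · j), hcoeff j⟩⟩

/-- Main theorem: recovery of a `d`-variate `n`-term exponential sum from
`(d+1)n` samples.  Here `δ 0 = Δ` and `δ 1, …, δ (d-1)` are the
identification shifts; the `δ i` are linearly independent.
`⟨φ, x⟩ = ∑ k, φ k * x k` is the bilinear inner product.
The samples are `f(sΔ)` for `0 ≤ s ≤ 2n-1` and `f((ℓ-1)Δ + δ i)` for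
`1 ≤ ℓ ≤ n` (encoded by `ℓ : Fin n` standing for `ℓ-1`) and `1 ≤ i ≤ d-1`
(encoded by `i : Fin d`, `i ≠ 0`).  If two parameter sets with nonzero
coefficients, pairwise distinct values `exp ⟨φ j, Δ⟩`, and imaginary parts
of all inner products `⟨φ j, δ i⟩` smaller than `π` in modulus produce the
same samples, then they coincide up to a permutation of the terms. -/
theorem recovery_from_min_samples
    (d n : ℕ) (hd : 1 ≤ d) (hn : 1 ≤ n)
    (δ : Fin d → Fin d → ℂ) (hδ : LinearIndependent ℂ δ)
    (α α' : Fin n → ℂ) (φ φ' : Fin n → Fin d → ℂ)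
    (hα : ∀ j, α j ≠ 0) (hα' : ∀ j, α' j ≠ 0)
    (hdist : Function.Injective fun j => Complex.exp (∑ k, φ j k * δ ⟨0, hd⟩ k))
    (hdist' : Function.Injective fun j => Complex.exp (∑ k, φ' j k * δ ⟨0, hd⟩ k))
    (hIm : ∀ j i, |(∑ k, φ j k * δ i k).im| < Real.pi)
    (hIm' : ∀ j i, |(∑ k, φ' j k * δ i k).im| < Real.pi)
    (hsamp1 : ∀ s : ℕ, s ≤ 2 * n - 1 →
      ∑ j, α j * Complex.exp (∑ k, φ j k * ((s : ℂ) * δ ⟨0, hd⟩ k)) =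
      ∑ j, α' j * Complex.exp (∑ k, φ' j k * ((s : ℂ) * δ ⟨0, hd⟩ k)))
    (hsamp2 : ∀ (ℓ : Fin n) (i : Fin d), i ≠ ⟨0, hd⟩ →
      ∑ j, α j * Complex.exp (∑ k, φ j k * (((ℓ : ℕ) : ℂ) * δ ⟨0, hd⟩ k + δ i k)) =
      ∑ j, α' j * Complex.exp (∑ k, φ' j k * (((ℓ : ℕ) : ℂ) * δ ⟨0, hd⟩ k + δ i k))) :
    ∃ σ : Equiv.Perm (Fin n), ∀ j, φ' j = φ (σ j) ∧ α' j = α (σ j) :=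
  recovery_from_min_samples_general d n hd δ hδ α α' φ φ' hα' hdist hdist' hIm hIm' hsamp1 hsamp2
end

section
/- For every λ ∈ ℂ one has det(H1 − λ H0) = (det V)² · ∏_{j=1}^n α_j (λ_j − λ). Consequently, if λ_1, …, λ_n are pairwise distinct and α_1, …, α_n are all nonzero, then λ ∈ ℂ satisfies det(H1 − λ H0) = 0 if and only if λ ∈ {λ_1, …, λ_n}; i.e., the generalized eigenvalues of the pencil (H1, H0) are exactly the nodes λ_1, …, λ_n. -/
/-!
With `V = (vandermonde lam)ᵀ` (Mathlib's `vandermonde` is the transpose of the paper's `V`), every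
Hankel matrix of weighted power sums factors as `V * diagonal w * Vᵀ`; for the pencil the weights
are `α j * (lam j - z)`. Taking determinants gives the formula, and `det V ≠ 0` exactly when the
nodes are distinct.
-/

open Matrix

namespace Matrix

variable {R : Type*} [CommRing R] {n : ℕ}

def momentHankel (w v : Fin n → R) : Matrix (Fin n) (Fin n) R :=
  of fun i j => ∑ k, w k * v k ^ (i + j : ℕ)

theorem vandermonde_transpose_mul_diagonal_mul_vandermonde (w v : Fin n → R) :
    (vandermonde v)ᵀ * diagonal w * vandermonde v = momentHankel w v := by
  ext i j
  rw [mul_apply]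
  simp only [mul_diagonal, transpose_apply, vandermonde_apply, momentHankel,
    of_apply, pow_add]
  exact Finset.sum_congr rfl fun k _ => by ring

theorem det_momentHankel (w v : Fin n → R) :
    (momentHankel w v).det = (vandermonde v).det ^ 2 * ∏ k, w k := by
  rw [← vandermonde_transpose_mul_diagonal_mul_vandermonde, det_mul, det_mul, det_transpose,
    det_diagonal]
  ring

/-- Shifting the samples by one multiplies the weight of each node `lam j` by `lam j`. -/
theorem hankel_pencil_eq_momentHankel (α lam : Fin n → R) (F : ℕ → R)
    (hF : ∀ s : ℕ, F s = ∑ j, α j * lam j ^ s) (z : R) :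
    (of fun s t : Fin n => F ((s : ℕ) + (t : ℕ) + 1)) -
        z • (of fun s t : Fin n => F ((s : ℕ) + (t : ℕ))) =
      momentHankel (fun j => α j * (lam j - z)) lam := by
  ext s t
  simp only [sub_apply, smul_apply, of_apply, momentHankel, hF, smul_eq_mul, Finset.mul_sum,
    ← Finset.sum_sub_distrib]
  exact Finset.sum_congr rfl fun j _ => by ring

theorem det_hankel_pencil (α lam : Fin n → R) (F : ℕ → R)
    (hF : ∀ s : ℕ, F s = ∑ j, α j * lam j ^ s) (z : R) :
    ((of fun s t : Fin n => F ((s : ℕ) + (t : ℕ) + 1)) -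
        z • (of fun s t : Fin n => F ((s : ℕ) + (t : ℕ)))).det =
      (vandermonde lam)ᵀ.det ^ 2 * ∏ j, α j * (lam j - z) := by
  rw [hankel_pencil_eq_momentHankel α lam F hF, det_momentHankel, det_transpose]

end Matrix

theorem hankel_pencil_eigenvalues_general
    (n : ℕ) (lam α : Fin n → ℂ) (F : ℕ → ℂ)
    (hF : ∀ s : ℕ, F s = ∑ j, α j * lam j ^ s) :
    (∀ z : ℂ,
      ((Matrix.of fun s t : Fin n => F ((s : ℕ) + (t : ℕ) + 1)) -
        z • (Matrix.of fun s t : Fin n => F ((s : ℕ) + (t : ℕ)))).det =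
      ((Matrix.of fun (s : Fin n) (j : Fin n) => lam j ^ (s : ℕ)).det) ^ 2 *
        ∏ j, α j * (lam j - z)) ∧
    (Function.Injective lam → (∀ j, α j ≠ 0) →
      ∀ z : ℂ,
        ((Matrix.of fun s t : Fin n => F ((s : ℕ) + (t : ℕ) + 1)) -
          z • (Matrix.of fun s t : Fin n => F ((s : ℕ) + (t : ℕ)))).det = 0 ↔
        ∃ j, z = lam j) := by
  refine ⟨det_hankel_pencil α lam F hF, fun hinj hα z => ?_⟩
  have hV : (vandermonde lam).det ≠ 0 := det_vandermonde_ne_zero_iff.2 hinj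
  rw [det_hankel_pencil α lam F hF]
  simp [hV, hα, Finset.prod_eq_zero_iff, sub_eq_zero, eq_comm (a := z)]

/-- For the Hankel matrices `H0 = (F_{s+t})` and `H1 = (F_{s+t+1})` of the
samples `F_s = ∑ j, α j * λ j ^ s` one has, for every `λ ∈ ℂ`,
`det (H1 - λ H0) = (det V)² * ∏ j, α j (λ j - λ)` with `V` the Vandermonde
matrix.  Consequently, if the `λ j` are pairwise distinct and the `α j` all
nonzero, then `det (H1 - λ H0) = 0` iff `λ ∈ {λ_1, …, λ_n}`: the generalized
eigenvalues of the pencil `(H1, H0)` are exactly the nodes. -/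
theorem hankel_pencil_eigenvalues
    (n : ℕ) (hn : 1 ≤ n) (lam α : Fin n → ℂ) (F : ℕ → ℂ)
    (hF : ∀ s : ℕ, F s = ∑ j, α j * lam j ^ s) :
    (∀ z : ℂ,
      ((Matrix.of fun s t : Fin n => F ((s : ℕ) + (t : ℕ) + 1)) -
        z • (Matrix.of fun s t : Fin n => F ((s : ℕ) + (t : ℕ)))).det =
      ((Matrix.of fun (s : Fin n) (j : Fin n) => lam j ^ (s : ℕ)).det) ^ 2 *
        ∏ j, α j * (lam j - z)) ∧
    (Function.Injective lam → (∀ j, α j ≠ 0) →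
      ∀ z : ℂ,
        ((Matrix.of fun s t : Fin n => F ((s : ℕ) + (t : ℕ) + 1)) -
          z • (Matrix.of fun s t : Fin n => F ((s : ℕ) + (t : ℕ)))).det = 0 ↔
        ∃ j, z = lam j) :=
  hankel_pencil_eigenvalues_general n lam α F hF
end

section
/- For each j = 1, …, n there exists a nonzero vector v ∈ ℂⁿ with H1 v = λ_j H0 v; i.e., each node λ_j is a generalized eigenvalue of the Hankel pencil (H1, H0). -/
/-!
With `V` the Vandermonde matrix of the nodes, `H1 - μ • H0 = Vᵀ * diag(α k * (λ k - μ)) * V`.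
At `μ = λ j` the diagonal factor has a zero entry, so `H1 - λ j • H0` is singular and any nonzero
vector in its kernel is a generalized eigenvector.
-/

open Matrix

variable {R : Type*} [CommRing R]

theorem Matrix.exists_ne_zero_mulVec_eq_smul_mulVec_of_det_sub_smul_eq_zero
    {ι K : Type*} [Fintype ι] [DecidableEq ι] [Field K] {A B : Matrix ι ι K} {μ : K}
    (h : (A - μ • B).det = 0) : ∃ v : ι → K, v ≠ 0 ∧ A *ᵥ v = μ • B *ᵥ v := by
  obtain ⟨v, hv, hker⟩ := exists_mulVec_eq_zero_iff.mpr h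
  refine ⟨v, hv, sub_eq_zero.mp ?_⟩
  rwa [← smul_mulVec, ← sub_mulVec]

theorem Matrix.det_mul_diagonal_mul_eq_zero {n : Type*} [Fintype n] [DecidableEq n]
    (A B : Matrix n n R) {d : n → R} {j : n} (hj : d j = 0) :
    (A * diagonal d * B).det = 0 := by
  rw [det_mul, det_mul, det_diagonal, Finset.prod_eq_zero (Finset.mem_univ j) hj,
    mul_zero, zero_mul]

theorem hankel_succ_sub_smul_hankel_eq_vandermonde {n : ℕ} (lam α : Fin n → R) (F : ℕ → R)
    (hF : ∀ s : ℕ, F s = ∑ j, α j * lam j ^ s) (μ : R) :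
    (of fun s t : Fin n => F ((s : ℕ) + (t : ℕ) + 1)) -
        μ • (of fun s t : Fin n => F ((s : ℕ) + (t : ℕ))) =
      (vandermonde lam)ᵀ * diagonal (fun k => α k * (lam k - μ)) * vandermonde lam := by
  ext s t
  rw [mul_apply]
  simp only [Matrix.sub_apply, Matrix.smul_apply, of_apply, hF, smul_eq_mul, Finset.mul_sum,
    ← Finset.sum_sub_distrib, mul_diagonal, transpose_apply, vandermonde_apply]
  refine Finset.sum_congr rfl fun k _ => ?_
  ring

theorem node_is_generalized_eigenvalue_general
    (n : ℕ) (lam α : Fin n → ℂ) (F : ℕ → ℂ)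
    (hF : ∀ s : ℕ, F s = ∑ j, α j * lam j ^ s) :
    ∀ j : Fin n, ∃ v : Fin n → ℂ, v ≠ 0 ∧
      (Matrix.of fun s t : Fin n => F ((s : ℕ) + (t : ℕ) + 1)).mulVec v =
        lam j • (Matrix.of fun s t : Fin n => F ((s : ℕ) + (t : ℕ))).mulVec v := by
  intro j
  apply exists_ne_zero_mulVec_eq_smul_mulVec_of_det_sub_smul_eq_zero
  rw [hankel_succ_sub_smul_hankel_eq_vandermonde lam α F hF]
  exact det_mul_diagonal_mul_eq_zero _ _ (j := j) (by simp)

/-- Each node `λ j` is a generalized eigenvalue of the Hankel pencil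
`(H1, H0)` built from the samples `F_s = ∑ j, α j * λ j ^ s`: there is a
nonzero vector `v ∈ ℂⁿ` with `H1 v = λ j H0 v`. -/
theorem node_is_generalized_eigenvalue
    (n : ℕ) (hn : 1 ≤ n) (lam α : Fin n → ℂ) (F : ℕ → ℂ)
    (hF : ∀ s : ℕ, F s = ∑ j, α j * lam j ^ s) :
    ∀ j : Fin n, ∃ v : Fin n → ℂ, v ≠ 0 ∧
      (Matrix.of fun s t : Fin n => F ((s : ℕ) + (t : ℕ) + 1)).mulVec v =
        lam j • (Matrix.of fun s t : Fin n => F ((s : ℕ) + (t : ℕ))).mulVec v :=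
  node_is_generalized_eigenvalue_general n lam α F hF
end

section
/- (Solution of the disentanglement system.) Let d, n ≥ 1, let φ_1, …, φ_n ∈ ℂ^d and α_1, …, α_n ∈ ℂ, let f(x) = Σ_{j=1}^n α_j exp(⟨φ_j, x⟩), let Δ, δ ∈ ℂ^d, and set Φ_j = ⟨φ_j, Δ⟩. Suppose there are indices 0 = h_0 < h_1 < … < h_ν = n such that Φ_k = Φ_{h_j} for all k with h_{j−1} < k ≤ h_j, and that the ν values exp(Φ_{h_1}), …, exp(Φ_{h_ν}) are pairwise distinct. Fix an integer s ≥ 0 and define the samples F_{sℓ} = f((ℓ−1)Δ + sδ) for ℓ = 1, …, ν. Then the ν×ν Vandermonde system whose (ℓ, j) entry is exp((ℓ−1)Φ_{h_j}) and whose right-hand side is (F_{s1}, …, F_{sν})ᵀ has the unique solution A_{sj} = Σ_{k=h_{j−1}+1}^{h_j} α_k exp(⟨φ_k, sδ⟩), j = 1, …, ν. -/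
/-! Since `exp ⟨φ_k, (ℓ-1)Δ + sδ⟩ = exp((ℓ-1) Φ_k) exp ⟨φ_k, sδ⟩` and `Φ_k` is constant on each
block `h_{j-1} < k ≤ h_j`, grouping the terms of `f` by blocks turns the sample `F_{sℓ}` into
`∑_j exp((ℓ-1) Φ_{h_j}) A_{sj}`. The coefficient matrix is the Vandermonde matrix of the pairwise
distinct nodes `exp Φ_{h_j}`, hence invertible, so this solution is the only one. -/

open Finset

theorem Finset.sum_sum_Ico_castSucc_succ {M : Type*} [AddCommMonoid M] {ν : ℕ}
    {h : Fin (ν + 1) → ℕ} (hh : Monotone h) (G : ℕ → M) :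
    ∑ j : Fin ν, ∑ k ∈ Ico (h j.castSucc) (h j.succ), G k =
      ∑ k ∈ Ico (h 0) (h (Fin.last ν)), G k := by
  induction ν with
  | zero => simp
  | succ ν ih =>
    rw [Fin.sum_univ_castSucc]
    have hinit := ih (h := h ∘ Fin.castSucc) (hh.comp Fin.strictMono_castSucc.monotone)
    simp only [Function.comp_apply, ← Fin.succ_castSucc, Fin.castSucc_zero] at hinit
    rw [hinit, Fin.succ_last]
    exact sum_Ico_consecutive G (hh (Fin.zero_le _)) (hh (Fin.le_last _))

theorem Finset.sum_Ico_mul_eq_sum_mul_sum_Ico {R : Type*} [NonUnitalNonAssocSemiring R] {ν : ℕ}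
    {h : Fin (ν + 1) → ℕ} (hh : Monotone h) {g : ℕ → R} {w : Fin ν → R}
    (hg : ∀ j : Fin ν, ∀ k ∈ Ico (h j.castSucc) (h j.succ), g k = w j) (c : ℕ → R) :
    ∑ k ∈ Ico (h 0) (h (Fin.last ν)), g k * c k =
      ∑ j : Fin ν, w j * ∑ k ∈ Ico (h j.castSucc) (h j.succ), c k := by
  rw [← sum_sum_Ico_castSucc_succ hh]
  refine sum_congr rfl fun j _ => ?_
  rw [mul_sum]
  exact sum_congr rfl fun k hk => by rw [hg j k hk]

theorem Complex.exp_sum_mul_mul_add {ι : Type*} [Fintype ι] (φ x y : ι → ℂ) (c : ℂ) :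
    Complex.exp (∑ i, φ i * (c * x i + y i)) =
      Complex.exp (c * ∑ i, φ i * x i) * Complex.exp (∑ i, φ i * y i) := by
  rw [← Complex.exp_add, mul_sum, ← sum_add_distrib]
  congr 1
  exact sum_congr rfl fun i _ => by ring

theorem Matrix.eq_of_forall_sum_pow_mul_eq {R : Type*} [CommRing R] [IsDomain R] {n : ℕ}
    {f A B : Fin n → R} (hf : Function.Injective f)
    (hAB : ∀ i : Fin n, ∑ j, f j ^ (i : ℕ) * A j = ∑ j, f j ^ (i : ℕ) * B j) : A = B := by
  refine sub_eq_zero.mp (eq_zero_of_forall_pow_sum_mul_pow_eq_zero hf fun i => ?_)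
  simp only [Pi.sub_apply, mul_comm (_ - _), mul_sub, sum_sub_distrib, hAB i, sub_self]

/-- Terms are indexed `0, …, n-1` and `h : Fin (ν+1) → ℕ` encodes `0 = h_0 < … < h_ν = n`;
block `j` consists of the terms `k` with `h_{j-1} ≤ k < h_j`, with representative `h_j - 1`,
and `ℓ : Fin ν` stands for `ℓ - 1`. -/
theorem disentanglement_system_general
    (d n ν : ℕ)
    (φ : ℕ → Fin d → ℂ) (α : ℕ → ℂ) (Δ δ : Fin d → ℂ)
    (Φ : ℕ → ℂ) (hΦ : ∀ k, Φ k = ∑ i, φ k i * Δ i)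
    (h : Fin (ν + 1) → ℕ) (hmono : StrictMono h)
    (h0 : h 0 = 0) (hlast : h (Fin.last ν) = n)
    (hcol : ∀ j : Fin ν, ∀ k : ℕ, h j.castSucc ≤ k → k < h j.succ →
      Φ k = Φ (h j.succ - 1))
    (hdist : Function.Injective fun j : Fin ν => Complex.exp (Φ (h j.succ - 1)))
    (s : ℕ) (F : Fin ν → ℂ)
    (hF : ∀ ℓ : Fin ν, F ℓ = ∑ k ∈ Finset.range n, α k *
      Complex.exp (∑ i, φ k i * (((ℓ : ℕ) : ℂ) * Δ i + (s : ℂ) * δ i))) :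
    (∀ ℓ : Fin ν, ∑ j : Fin ν,
        Complex.exp (((ℓ : ℕ) : ℂ) * Φ (h j.succ - 1)) *
          (∑ k ∈ Finset.Ico (h j.castSucc) (h j.succ),
            α k * Complex.exp (∑ i, φ k i * ((s : ℂ) * δ i))) = F ℓ) ∧
    ∀ A : Fin ν → ℂ,
      (∀ ℓ : Fin ν, ∑ j : Fin ν,
        Complex.exp (((ℓ : ℕ) : ℂ) * Φ (h j.succ - 1)) * A j = F ℓ) →
      A = fun j => ∑ k ∈ Finset.Ico (h j.castSucc) (h j.succ),
        α k * Complex.exp (∑ i, φ k i * ((s : ℂ) * δ i)) := by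
  have hsolves : ∀ ℓ : Fin ν, ∑ j : Fin ν,
      Complex.exp (((ℓ : ℕ) : ℂ) * Φ (h j.succ - 1)) *
        (∑ k ∈ Finset.Ico (h j.castSucc) (h j.succ),
          α k * Complex.exp (∑ i, φ k i * ((s : ℂ) * δ i))) = F ℓ := by
    intro ℓ
    have hpiles := sum_Ico_mul_eq_sum_mul_sum_Ico hmono.monotone
      (g := fun k => Complex.exp (((ℓ : ℕ) : ℂ) * Φ k))
      (fun j k hk => by rw [hcol j k (mem_Ico.mp hk).1 (mem_Ico.mp hk).2])
      (fun k => α k * Complex.exp (∑ i, φ k i * ((s : ℂ) * δ i)))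
    rw [h0, hlast, Nat.Ico_zero_eq_range] at hpiles
    rw [← hpiles, hF]
    refine sum_congr rfl fun k _ => ?_
    rw [Complex.exp_sum_mul_mul_add, ← hΦ]
    ring
  refine ⟨hsolves, fun A hA => Matrix.eq_of_forall_sum_pow_mul_eq hdist fun ℓ => ?_⟩
  simp only [← Complex.exp_nat_mul]
  rw [hA ℓ, hsolves ℓ]

/-- Solution of the disentanglement system.  Terms are indexed `0, …, n-1`
(0-indexed version of `1, …, n`) and `h : Fin (ν+1) → ℕ` encodes the
collision indices `0 = h_0 < h_1 < … < h_ν = n`; pile `j` consists of the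
terms `k` with `h_{j-1} ≤ k < h_j`, with representative `h_j - 1`.  Assume
`Φ k = ⟨φ k, Δ⟩` is constant on each pile and the `ν` values `exp Φ_{h_j}`
are pairwise distinct.  For fixed `s`, the samples
`F ℓ = f((ℓ-1)Δ + sδ)`, `ℓ = 1, …, ν` (encoded by `ℓ : Fin ν` standing for
`ℓ-1`), satisfy the `ν×ν` Vandermonde system with `(ℓ, j)` entry
`exp ((ℓ-1) Φ_{h_j})`, whose unique solution is
`A j = ∑_{k ∈ pile j} α k * exp ⟨φ k, sδ⟩`. -/
theorem disentanglement_system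
    (d n ν : ℕ) (hd : 1 ≤ d) (hn : 1 ≤ n) (hν : 1 ≤ ν)
    (φ : ℕ → Fin d → ℂ) (α : ℕ → ℂ) (Δ δ : Fin d → ℂ)
    (Φ : ℕ → ℂ) (hΦ : ∀ k, Φ k = ∑ i, φ k i * Δ i)
    (h : Fin (ν + 1) → ℕ) (hmono : StrictMono h)
    (h0 : h 0 = 0) (hlast : h (Fin.last ν) = n)
    (hcol : ∀ j : Fin ν, ∀ k : ℕ, h j.castSucc ≤ k → k < h j.succ →
      Φ k = Φ (h j.succ - 1))
    (hdist : Function.Injective fun j : Fin ν => Complex.exp (Φ (h j.succ - 1)))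
    (s : ℕ) (F : Fin ν → ℂ)
    (hF : ∀ ℓ : Fin ν, F ℓ = ∑ k ∈ Finset.range n, α k *
      Complex.exp (∑ i, φ k i * (((ℓ : ℕ) : ℂ) * Δ i + (s : ℂ) * δ i))) :
    (∀ ℓ : Fin ν, ∑ j : Fin ν,
        Complex.exp (((ℓ : ℕ) : ℂ) * Φ (h j.succ - 1)) *
          (∑ k ∈ Finset.Ico (h j.castSucc) (h j.succ),
            α k * Complex.exp (∑ i, φ k i * ((s : ℂ) * δ i))) = F ℓ) ∧
    ∀ A : Fin ν → ℂ,
      (∀ ℓ : Fin ν, ∑ j : Fin ν,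
        Complex.exp (((ℓ : ℕ) : ℂ) * Φ (h j.succ - 1)) * A j = F ℓ) →
      A = fun j => ∑ k ∈ Finset.Ico (h j.castSucc) (h j.succ),
        α k * Complex.exp (∑ i, φ k i * ((s : ℂ) * δ i)) :=
  disentanglement_system_general d n ν φ α Δ δ Φ hΦ h hmono h0 hlast hcol hdist s F hF
end
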